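/- arXiv:1308.0719 — 2 statements merged into one kernel-verified Lean document; each statement's English description precedes it below -/
import Mathlib

section
/- Let λ_1,...,λ_n, C ∈ ℝ∖{0} and smooth ω_j : I → ℂ∖{0}. Suppose for all s ∈ I and all (x_1,...,x_n) with Σ λ_j x_j² = C, and for all a ∈ ℝ^n with Σ_j λ_j x_j a_j = 0, we have Σ_l a_l x_l Im(ω̄_l(s) ω̇_l(s)) = 0. If for each j there exists a point x on the quadric Σ λ_j x_j² = C with x_j ≠ 0 and x_k ≠ 0 for some k ≠ j (e.g., n ≥ 2 and all λ_j C > 0 or the quadric is suitably nondegenerate), then Im(ω̄_1 ω̇_1)/λ_1 = ⋯ = Im(ω̄_n ω̇_n)/λ_n on I. Conversely, if Im(ω̄_j ω̇_j)/λ_j is independent of j, then the displayed sum vanishes for all such x, a. -/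
/-!
Only the linear algebra matters, pointwise in `s`, with `μ_l = Im(ω̄_l ω̇_l)(s)`. If
`μ = c λ`, the sum is `c` times the tangency relation `∑ λ_l x_l a_l = 0`. Conversely, at a point
`x` of the quadric with `x_j x_k ≠ 0`, the tangent vector `a = λ_k x_k e_j - λ_j x_j e_k` turns the
hypothesis into `x_j x_k (λ_k μ_j - λ_j μ_k) = 0`.
-/

open Finset

variable {ι : Type*} [Fintype ι]

lemma sum_mul_single_sub_single [DecidableEq ι] (g : ι → ℝ) {j k : ι} (hjk : j ≠ k) (p q : ℝ) :
    ∑ l, g l * (Pi.single j p - Pi.single k q : ι → ℝ) l = g j * p - g k * q := by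
  rw [Fintype.sum_eq_add j k hjk fun l hl => by simp [hl.1, hl.2]]
  simp [hjk, hjk.symm, sub_eq_add_neg]

lemma div_eq_div_of_forall_tangent (lam μ : ι → ℝ) (hlam : ∀ j, lam j ≠ 0) (x : ι → ℝ)
    (H : ∀ a : ι → ℝ, ∑ l, lam l * x l * a l = 0 → ∑ l, a l * x l * μ l = 0)
    {j k : ι} (hjk : j ≠ k) (hxj : x j ≠ 0) (hxk : x k ≠ 0) :
    μ j / lam j = μ k / lam k := by
  classical
  set a : ι → ℝ := Pi.single j (lam k * x k) - Pi.single k (lam j * x j)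
  have htangent : ∑ l, lam l * x l * a l = 0 := by
    rw [sum_mul_single_sub_single _ hjk]; ring
  have hvanish : ∑ l, x l * μ l * a l = 0 := by
    rw [← H a htangent]; exact sum_congr rfl fun l _ => by ring
  rw [sum_mul_single_sub_single _ hjk] at hvanish
  rw [div_eq_div_iff (hlam j) (hlam k)]
  refine mul_left_cancel₀ (mul_ne_zero hxj hxk) ?_
  linear_combination hvanish

lemma sum_mul_eq_zero_of_div_eq_div (lam μ : ι → ℝ) (hlam : ∀ j, lam j ≠ 0)
    (hμ : ∀ j k, μ j / lam j = μ k / lam k) {x a : ι → ℝ} (ha : ∑ l, lam l * x l * a l = 0) :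
    ∑ l, a l * x l * μ l = 0 := by
  rcases isEmpty_or_nonempty ι with hι | ⟨⟨j₀⟩⟩
  · simp
  have hμ_eq : ∀ l, μ l = μ j₀ / lam j₀ * lam l := fun l => by
    rw [← hμ l j₀, div_mul_cancel₀ _ (hlam l)]
  calc ∑ l, a l * x l * μ l = μ j₀ / lam j₀ * ∑ l, lam l * x l * a l := by
        rw [mul_sum]; exact sum_congr rfl fun l _ => by rw [hμ_eq l]; ring
    _ = 0 := by rw [ha, mul_zero]

theorem forall_tangent_sum_eq_zero_iff (lam μ : ι → ℝ) (C : ℝ) (hlam : ∀ j, lam j ≠ 0)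
    (hrich : ∀ j k : ι, j ≠ k → ∃ x : ι → ℝ, (∑ l, lam l * x l ^ 2 = C) ∧ x j ≠ 0 ∧ x k ≠ 0) :
    (∀ x : ι → ℝ, ∑ l, lam l * x l ^ 2 = C →
        ∀ a : ι → ℝ, ∑ l, lam l * x l * a l = 0 → ∑ l, a l * x l * μ l = 0) ↔
      ∀ j k, μ j / lam j = μ k / lam k := by
  refine ⟨fun H j k => ?_, fun hμ x _ a ha => sum_mul_eq_zero_of_div_eq_div lam μ hlam hμ ha⟩
  rcases eq_or_ne j k with rfl | hjk
  · rfl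
  obtain ⟨x, hx, hxj, hxk⟩ := hrich j k hjk
  exact div_eq_div_of_forall_tangent lam μ hlam x (H x hx) hjk hxj hxk

theorem stmt_6_general (n : ℕ) (I : Set ℝ)
    (lam : Fin n → ℝ) (C : ℝ) (hlam : ∀ j, lam j ≠ 0)
    (ω : Fin n → ℝ → ℂ)
    (ω' : Fin n → ℝ → ℂ)
    (hrich : ∀ j k : Fin n, j ≠ k →
      ∃ x : Fin n → ℝ, (∑ l, lam l * (x l) ^ 2 = C) ∧ x j ≠ 0 ∧ x k ≠ 0) :
    (∀ s ∈ I, ∀ x : Fin n → ℝ, (∑ l, lam l * (x l) ^ 2 = C) →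
        ∀ a : Fin n → ℝ, (∑ l, lam l * x l * a l = 0) →
          ∑ l, a l * x l * ((starRingEnd ℂ) (ω l s) * ω' l s).im = 0)
      ↔ (∀ s ∈ I, ∀ j k : Fin n,
          ((starRingEnd ℂ) (ω j s) * ω' j s).im / lam j
            = ((starRingEnd ℂ) (ω k s) * ω' k s).im / lam k) :=
  forall₂_congr fun _ _ => forall_tangent_sum_eq_zero_iff lam _ C hlam hrich

/-- the tangential vanishing condition
Σ aₗxₗ Im(ω̄ₗω̇ₗ) = 0 (for all x on the quadric Σλⱼxⱼ² = C and all a tangent at x)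
holds iff Im(ω̄ⱼω̇ⱼ)/λⱼ is independent of j on I, assuming the quadric is rich
enough (for all j ≠ k it has a point with xⱼ ≠ 0 ≠ x_k). -/
theorem stmt_6 (n : ℕ) (I : Set ℝ) (hI : IsOpen I)
    (lam : Fin n → ℝ) (C : ℝ) (hlam : ∀ j, lam j ≠ 0) (hC : C ≠ 0)
    (ω : Fin n → ℝ → ℂ) (hω0 : ∀ j, ∀ s ∈ I, ω j s ≠ 0)
    (ω' : Fin n → ℝ → ℂ) (hderiv : ∀ j, ∀ s ∈ I, HasDerivAt (ω j) (ω' j s) s)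
    (hrich : ∀ j k : Fin n, j ≠ k →
      ∃ x : Fin n → ℝ, (∑ l, lam l * (x l) ^ 2 = C) ∧ x j ≠ 0 ∧ x k ≠ 0) :
    (∀ s ∈ I, ∀ x : Fin n → ℝ, (∑ l, lam l * (x l) ^ 2 = C) →
        ∀ a : Fin n → ℝ, (∑ l, lam l * x l * a l = 0) →
          ∑ l, a l * x l * ((starRingEnd ℂ) (ω l s) * ω' l s).im = 0)
      ↔ (∀ s ∈ I, ∀ j k : Fin n,
          ((starRingEnd ℂ) (ω j s) * ω' j s).im / lam j
            = ((starRingEnd ℂ) (ω k s) * ω' k s).im / lam k) :=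
  stmt_6_general n I lam C hlam ω ω' hrich
end

section
/- Let λ_1,...,λ_n ∈ ℝ∖{0}, C ∈ ℝ∖{0}, r ∈ (0,∞)^n, φ̇ ∈ (0,∞)^n, and suppose the quadric Q = {x : Σ λ_j x_j² = C} is such that for every pair j ≠ k it contains a point with x_j x_k ≠ 0. Then the following are equivalent: (i) for every x ∈ Q and every a ∈ ℝ^n with Σ_j λ_j x_j a_j = 0 one has (Σ_p a_p x_p r_p²)(Σ_q x_q² r_q² φ̇_q) = 0; (ii) r_1²/λ_1 = r_2²/λ_2 = ⋯ = r_n²/λ_n. -/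
/-!
For a fixed `x` on the quadric the second factor of (i) is positive, so (i) says that the linear
form `a ↦ Σ_p a_p x_p r_p²` vanishes on the tangent space `{a : Σ_l λ_l x_l a_l = 0}`, i.e. that
`(x_p r_p²)_p` is proportional to the normal `(λ_p x_p)_p`. Testing against the tangent vector
`λ_k x_k e_j - λ_j x_j e_k` at a point with `x_j x_k ≠ 0` gives `r_j² λ_k = r_k² λ_j`; conversely,
`r_p² = c λ_p` turns the linear form into `c` times the tangency condition.
-/

open Finset Matrix

theorem mul_eq_mul_of_dotProduct_eq_zero_imp {ι R : Type*} [Fintype ι] [DecidableEq ι]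
    [CommRing R] {v w : ι → R} (h : ∀ a, w ⬝ᵥ a = 0 → v ⬝ᵥ a = 0) (j k : ι) :
    v j * w k = v k * w j := by
  have hw : w ⬝ᵥ (Pi.single j (w k) - Pi.single k (w j)) = 0 := by
    simp only [dotProduct_sub, dotProduct_single]
    ring
  have hv := h _ hw
  simp only [dotProduct_sub, dotProduct_single] at hv
  exact sub_eq_zero.mp hv

theorem exists_eq_mul_of_forall_div_eq_div {ι K : Type*} [Field K] {u w : ι → K}
    (hw : ∀ j, w j ≠ 0) (h : ∀ j k, u j / w j = u k / w k) : ∃ c, ∀ p, u p = c * w p := by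
  cases isEmpty_or_nonempty ι with
  | inl _ => exact ⟨0, isEmptyElim⟩
  | inr hι =>
    obtain ⟨i⟩ := hι
    exact ⟨u i / w i, fun p => by rw [← h p i, div_mul_cancel₀ _ (hw p)]⟩

theorem sum_sq_mul_sq_mul_pos {ι : Type*} [Fintype ι] {x r φ : ι → ℝ} (hφ : ∀ q, 0 < φ q)
    {j : ι} (hxj : x j ≠ 0) (hrj : r j ≠ 0) : 0 < ∑ q, x q ^ 2 * r q ^ 2 * φ q := by
  refine sum_pos' (fun q _ => by have := (hφ q).le; positivity) ⟨j, mem_univ j, ?_⟩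
  have := hφ j
  positivity

theorem stmt_8_general (n : ℕ) (lam : Fin n → ℝ) (C : ℝ)
    (hlam : ∀ j, lam j ≠ 0)
    (r φ' : Fin n → ℝ) (hr : ∀ j, 0 < r j) (hφ' : ∀ j, 0 < φ' j)
    (hrich : ∀ j k : Fin n, j ≠ k →
      ∃ x : Fin n → ℝ, (∑ l, lam l * (x l) ^ 2 = C) ∧ x j ≠ 0 ∧ x k ≠ 0) :
    (∀ x : Fin n → ℝ, (∑ l, lam l * (x l) ^ 2 = C) →
        ∀ a : Fin n → ℝ, (∑ l, lam l * x l * a l = 0) →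
          (∑ p, a p * x p * (r p) ^ 2) * (∑ q, (x q) ^ 2 * (r q) ^ 2 * φ' q) = 0)
      ↔ (∀ j k : Fin n, (r j) ^ 2 / lam j = (r k) ^ 2 / lam k) := by
  constructor
  · intro h j k
    rcases eq_or_ne j k with rfl | hjk
    · rfl
    obtain ⟨x, hx, hxj, hxk⟩ := hrich j k hjk
    have hpos := sum_sq_mul_sq_mul_pos hφ' hxj (hr j).ne'
    have hperp : ∀ a, (fun l => lam l * x l) ⬝ᵥ a = 0 → (fun l => x l * r l ^ 2) ⬝ᵥ a = 0 := by
      intro a ha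
      have hfirst := (mul_eq_zero.mp (h x hx a ha)).resolve_right hpos.ne'
      rw [← hfirst]
      exact sum_congr rfl fun p _ => by ring
    have hcross := mul_eq_mul_of_dotProduct_eq_zero_imp hperp j k
    rw [div_eq_div_iff (hlam j) (hlam k)]
    apply mul_left_cancel₀ (mul_ne_zero hxj hxk)
    linear_combination hcross
  · intro hratio x _ a ha
    obtain ⟨c, hc⟩ := exists_eq_mul_of_forall_div_eq_div hlam hratio
    have hfirst : ∑ p, a p * x p * r p ^ 2 = c * ∑ l, lam l * x l * a l := by
      rw [mul_sum]
      exact sum_congr rfl fun p _ => by rw [hc p]; ring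
    rw [hfirst, ha, mul_zero, zero_mul]

/-- on a rich quadric Σλⱼxⱼ² = C, the vanishing
(Σ_p a_p x_p r_p²)(Σ_q x_q² r_q² φ̇_q) = 0 for all x on the quadric and all a
tangent at x is equivalent to r₁²/λ₁ = ⋯ = rₙ²/λₙ. -/
theorem stmt_8 (n : ℕ) (lam : Fin n → ℝ) (C : ℝ)
    (hlam : ∀ j, lam j ≠ 0) (hC : C ≠ 0)
    (r φ' : Fin n → ℝ) (hr : ∀ j, 0 < r j) (hφ' : ∀ j, 0 < φ' j)
    (hrich : ∀ j k : Fin n, j ≠ k →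
      ∃ x : Fin n → ℝ, (∑ l, lam l * (x l) ^ 2 = C) ∧ x j ≠ 0 ∧ x k ≠ 0) :
    (∀ x : Fin n → ℝ, (∑ l, lam l * (x l) ^ 2 = C) →
        ∀ a : Fin n → ℝ, (∑ l, lam l * x l * a l = 0) →
          (∑ p, a p * x p * (r p) ^ 2) * (∑ q, (x q) ^ 2 * (r q) ^ 2 * φ' q) = 0)
      ↔ (∀ j k : Fin n, (r j) ^ 2 / lam j = (r k) ^ 2 / lam k) :=
  stmt_8_general n lam C hlam r φ' hr hφ' hrich
end
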